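/- (Low-frequency energy estimate for linearized Einstein–scalar field.) Assume the exponents are δ-subcritical for some δ > 0. Let λ ∈ ℤ^D \ {0} and let (η, κ, φ, ψ, ν) be a λ-mode CMCTC solution of the linearized Einstein–scalar field system on (0, t_{λ*}]. Then: (i) there is C > 0 depending only on D, p_1,…,p_D, p_φ and δ such that for every t ∈ (0, t_{λ*}]: |t·(d/dt)E_{λ,low}(t)| ≤ C·(t/t_{λ*})^δ·E_{λ,low}(t); (ii) there is C̊_low > 0 depending only on D, p_1,…,p_D, p_φ and δ such that for every t ∈ (0, t_{λ*}]: C̊_low^{−1}·E_{λ,low}(t) ≤ E_{λ,low}(t_{λ*}) ≤ C̊_low·E_{λ,low}(t). -/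

import Mathlib

open Real Filter MeasureTheory Topology

/-- τ_λ(t) = (∑ᵢ t^(2-2pᵢ) λᵢ²)^(1/2). -/
noncomputable def tau {D : ℕ} (p : Fin D → ℝ) (lam : Fin D → ℤ) (t : ℝ) : ℝ :=
  Real.sqrt (∑ i, t ^ (2 - 2 * p i) * ((lam i : ℝ)) ^ 2)

/-- A λ-mode CMCTC solution of the linearized Einstein–scalar field system on the
interval `I`: the projection of the linearized system in the constant-mean-curvature
transported-coordinate gauge (vanishing shift) onto the Fourier mode λ. -/
structure IsCMCTCSolution {D : ℕ} (p : Fin D → ℝ) (pphi : ℝ) (lam : Fin D → ℤ)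
    (η κ : ℝ → Fin D → Fin D → ℝ) (φ ψ ν : ℝ → ℝ) (I : Set ℝ) : Prop where
  cont_nu : ContinuousOn ν I
  eta_evol : ∀ t ∈ I, ∀ i j, HasDerivAt (fun s => η s i j)
    ((κ t i j + 2 * (p i - p j) * η t i j - p i * (if i = j then 1 else 0) * ν t) / t) t
  kappa_evol : ∀ t ∈ I, ∀ i j, HasDerivAt (fun s => κ s i j)
    ((-(tau p lam t ^ 2) * η t i j
      - t ^ (2 - 2 * p j) * (lam i : ℝ) * (lam j : ℝ) * (∑ a, η t a a)
      + (∑ a, t ^ (2 - 2 * p a) * (lam i : ℝ) * (lam a : ℝ) * η t a j)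
      + t ^ (2 - 2 * p j) * (lam j : ℝ) * (∑ b, (lam b : ℝ) * η t i b)
      + t ^ (2 - 2 * p j) * (lam i : ℝ) * (lam j : ℝ) * ν t
      + p i * (if i = j then 1 else 0) * ν t) / t) t
  phi_evol : ∀ t ∈ I, HasDerivAt φ ((ψ t + pphi * ν t) / t) t
  psi_evol : ∀ t ∈ I, HasDerivAt ψ ((-(tau p lam t ^ 2) * φ t - pphi * ν t) / t) t
  nu_elliptic : ∀ t ∈ I, (1 + tau p lam t ^ 2) * ν t =
    2 * tau p lam t ^ 2 * (∑ a, η t a a)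
      - 2 * ∑ a, ∑ i, t ^ (2 - 2 * p a) * (lam a : ℝ) * (lam i : ℝ) * η t a i
  cmc : ∀ t ∈ I, ∑ a, κ t a a = 0
  hamiltonian : ∀ t ∈ I,
    2 * tau p lam t ^ 2 * (∑ a, η t a a)
      - 2 * (∑ a, ∑ i, t ^ (2 - 2 * p a) * (lam a : ℝ) * (lam i : ℝ) * η t a i)
      - 2 * (∑ a, p a * κ t a a) + 4 * pphi * ψ t = 0
  momentum : ∀ t ∈ I, ∀ i,
    (∑ j, (lam j : ℝ) * κ t i j)
      + (lam i : ℝ) * (-(∑ a, p a * η t a a) + 2 * pphi * φ t)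
      + p i * (lam i : ℝ) * (∑ a, η t a a) = 0
  sym_eta : ∀ t ∈ I, ∀ a c,
    t ^ (-(2 * p a)) * η t a c = t ^ (-(2 * p c)) * η t c a
  sym_kappa : ∀ t ∈ I, ∀ a c,
    t ^ (-(2 * p a)) * (κ t a c + 2 * p a * η t a c)
      = t ^ (-(2 * p c)) * (κ t c a + 2 * p c * η t c a)

/-- G_i{}^j(t) = ∫_t^{t_{λ*}} s^{2pᵢ-2pⱼ} ds/s. -/
noncomputable def Gfun {D : ℕ} (p : Fin D → ℝ) (tstar : ℝ) (i j : Fin D) (t : ℝ) : ℝ :=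
  ∫ s in t..tstar, s ^ (2 * p i - 2 * p j - 1)

/-- The renormalized quantity Υ̃_i{}^j(t) = η_i{}^j(t) + G_i{}^j(t)·κ_j{}^i(t). -/
noncomputable def UpsT {D : ℕ} (p : Fin D → ℝ) (tstar : ℝ)
    (η κ : ℝ → Fin D → Fin D → ℝ) (t : ℝ) (i j : Fin D) : ℝ :=
  η t i j + Gfun p tstar i j t * κ t j i

/-- The renormalized scalar field φ̃(t) = φ(t) + log(t_{λ*}/t)·ψ(t). -/
noncomputable def phiT (φ ψ : ℝ → ℝ) (tstar t : ℝ) : ℝ :=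
  φ t + Real.log (tstar / t) * ψ t

/-- The low-frequency energy E_{λ,low} of the linearized Einstein–scalar field system. -/
noncomputable def ElowSys {D : ℕ} (p : Fin D → ℝ) (tstar : ℝ)
    (η κ : ℝ → Fin D → Fin D → ℝ) (φ ψ : ℝ → ℝ) (t : ℝ) : ℝ :=
  (∑ i, ∑ j, tstar ^ (-(2 * p i) + 2 * p j)
      * ((κ t i j) ^ 2 + (UpsT p tstar η κ t i j) ^ 2))
    + ψ t ^ 2 + phiT φ ψ tstar t ^ 2

/-!
Every component of the solution is controlled by `√E`, `E = E_{λ,low}(t)`: `κ_i^j` and `Υ̃_i^j`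
by `t_{λ*}^{p_i - p_j} √E` directly from the definition of `E`; `η_i^j = Υ̃_i^j - G_i^j κ_j^i` up to
the blow-up factor `(t/t_{λ*})^{-q_{ij}}` of `G_i^j`; and `ν` through the elliptic equation, where
`τ(t)² ≤ (t/t_{λ*})^{2δ}` makes it small. In `t E'` the renormalization cancels the non-decaying
part of `t η'` (by the symmetry conditions), and every other term is a frequency weight
`t^{2-2p_a} λ_u λ_v ≤ (t/t_{λ*})^{2-2p_a} t_{λ*}^{p_u+p_v-2p_a}` times a component. Once the
couplings through the indices of the component itself are seen to cancel, δ-subcriticality is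
exactly what makes every exponent of `t/t_{λ*}` at least `δ`. So `|t E'| ≤ C (t/t_{λ*})^δ E`, and
since `∫_0^{t_{λ*}} (s/t_{λ*})^δ ds/s = 1/δ`, Grönwall's argument gives (ii) with
`C̊_low = exp (C/δ)`.
-/

open intervalIntegral

theorem integral_rpow_sub_one_le {t T e q : ℝ} (ht : 0 < t) (htT : t ≤ T) (hq : 0 < q)
    (he : -q ≤ e) : ∫ s in t..T, s ^ (e - 1) ≤ T ^ e * (t / T) ^ (-q) / q := by
  have hT : 0 < T := ht.trans_le htT
  have h0 : (0 : ℝ) ∉ Set.uIcc t T := by simp [Set.uIcc_of_le htT, ht.not_ge]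
  calc ∫ s in t..T, s ^ (e - 1)
      ≤ ∫ s in t..T, T ^ (e + q) * s ^ (-q - 1) := by
        refine integral_mono_on htT (intervalIntegrable_rpow (Or.inr h0))
          ((intervalIntegrable_rpow (Or.inr h0)).const_mul _) fun s hs => ?_
        have hs0 : 0 < s := ht.trans_le hs.1
        calc s ^ (e - 1) = s ^ (e + q) * s ^ (-q - 1) := by rw [← rpow_add hs0]; ring_nf
          _ ≤ T ^ (e + q) * s ^ (-q - 1) := by
              gcongr
              · linarith
              · exact hs.2
    _ = T ^ (e + q) * ((t ^ (-q) - T ^ (-q)) / q) := by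
        rw [intervalIntegral.integral_const_mul, integral_rpow (Or.inr ⟨by linarith, h0⟩),
          sub_add_cancel]
        field_simp
        ring
    _ ≤ T ^ (e + q) * t ^ (-q) / q := by
        rw [mul_div_assoc]
        gcongr
        linarith [rpow_pos_of_pos hT (-q)]
    _ = T ^ e * (t / T) ^ (-q) / q := by
        rw [div_rpow ht.le hT.le, rpow_add hT, rpow_neg hT.le q]
        field_simp

theorem hasDerivAt_integral_rpow_left {t T r : ℝ} (ht : 0 < t) (hT : 0 < T) :
    HasDerivAt (fun u => ∫ s in u..T, s ^ r) (-(t ^ r)) t := by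
  have h0 : (0 : ℝ) ∉ Set.uIcc t T := by simp [Set.mem_uIcc, ht.not_ge, hT.not_ge]
  refine integral_hasDerivAt_left (intervalIntegrable_rpow (Or.inr h0)) ?_
    (continuousAt_rpow_const _ _ (Or.inl ht.ne'))
  exact (continuousOn_id.rpow_const fun s hs => Or.inl (ne_of_gt hs)).stronglyMeasurableAtFilter
    isOpen_Ioi _ ht

theorem log_div_le_rpow_neg {t T ε : ℝ} (ht : 0 < t) (hT : 0 < T) (hε : 0 < ε) :
    Real.log (T / t) ≤ ε⁻¹ * (t / T) ^ (-ε) := by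
  rw [rpow_neg (by positivity), ← inv_rpow (by positivity), inv_div, inv_mul_eq_div]
  exact log_le_rpow_div (by positivity) hε

theorem sq_rpow_mul_rpow {T a b : ℝ} (hT : 0 < T) (hab : 2 * a + b = 0) :
    (T ^ a) ^ 2 * T ^ b = 1 := by
  rw [← rpow_natCast, ← rpow_mul hT.le, ← rpow_add hT, Nat.cast_ofNat, mul_comm, hab, rpow_zero]

theorem abs_le_rpow_mul_of_rpow_mul_sq_le {T a b x A : ℝ} (hT : 0 < T) (hab : 2 * a + b = 0)
    (hA : 0 ≤ A) (h : T ^ b * x ^ 2 ≤ A ^ 2) : |x| ≤ T ^ a * A := by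
  refine abs_le_of_sq_le_sq ?_ (by positivity)
  calc x ^ 2 = (T ^ a) ^ 2 * (T ^ b * x ^ 2) := by
        rw [← mul_assoc, sq_rpow_mul_rpow hT hab, one_mul]
    _ ≤ (T ^ a * A) ^ 2 := by rw [mul_pow]; gcongr

theorem abs_rpow_mul_mul_le {T a b x y A B : ℝ} (hT : 0 < T) (hab : 2 * a + b = 0)
    (hx : |x| ≤ T ^ a * A) (hy : |y| ≤ T ^ a * B) : |T ^ b * (x * y)| ≤ A * B := by
  rw [abs_mul, abs_mul, abs_of_pos (rpow_pos_of_pos hT b)]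
  calc T ^ b * (|x| * |y|) ≤ T ^ b * ((T ^ a * A) * (T ^ a * B)) := by
        gcongr
        exact (abs_nonneg x).trans hx
    _ = ((T ^ a) ^ 2 * T ^ b) * (A * B) := by ring
    _ = A * B := by rw [sq_rpow_mul_rpow hT hab, one_mul]

theorem abs_sum_le_card_mul {D : ℕ} {f : Fin D → ℝ} {M : ℝ} (h : ∀ b, |f b| ≤ M) :
    |∑ b, f b| ≤ D * M :=
  (Finset.abs_sum_le_sum_abs _ _).trans
    (by simpa using Finset.sum_le_card_nsmul Finset.univ _ M fun b _ => h b)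

theorem add_max_le_sub_max {δ a b c d x : ℝ} (hac : δ + a + c ≤ x) (had : δ + a + d ≤ x)
    (hbc : δ + b + c ≤ x) (hbd : δ + b + d ≤ x) : δ + max a b ≤ x - max c d := by
  rcases le_total a b with hab | hab <;> rcases le_total c d with hcd | hcd <;>
    simp only [max_eq_left, max_eq_right, hab, hcd] <;> linarith

theorem mul_exp_neg_le_and_le_mul_exp_of_abs_deriv_le {E E' g g' : ℝ → ℝ} {a b : ℝ}
    (hab : a ≤ b) (hE : ∀ s ∈ Set.Icc a b, HasDerivAt E (E' s) s)
    (hg : ∀ s ∈ Set.Icc a b, HasDerivAt g (g' s) s)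
    (hbound : ∀ s ∈ Set.Icc a b, |E' s| ≤ g' s * E s) :
    E a * exp (-(g b - g a)) ≤ E b ∧ E b ≤ E a * exp (g b - g a) := by
  have hmem : ∀ s ∈ interior (Set.Icc a b), s ∈ Set.Icc a b := fun s hs => interior_subset hs
  have hup : MonotoneOn (fun s => E s * exp (g s)) (Set.Icc a b) := by
    refine monotoneOn_of_hasDerivWithinAt_nonneg (convex_Icc a b)
      (fun s hs => ((hE s hs).mul (hg s hs).exp).continuousAt.continuousWithinAt)
      (fun s hs => ((hE s (hmem s hs)).mul (hg s (hmem s hs)).exp).hasDerivWithinAt)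
      fun s hs => ?_
    have := neg_abs_le (E' s) |>.trans' (neg_le_neg (hbound s (hmem s hs)))
    nlinarith [exp_pos (g s)]
  have hdown : AntitoneOn (fun s => E s * exp (-g s)) (Set.Icc a b) := by
    refine antitoneOn_of_hasDerivWithinAt_nonpos (convex_Icc a b)
      (fun s hs => ((hE s hs).mul (hg s hs).neg.exp).continuousAt.continuousWithinAt)
      (fun s hs => ((hE s (hmem s hs)).mul (hg s (hmem s hs)).neg.exp).hasDerivWithinAt)
      fun s hs => ?_
    have := le_abs_self (E' s) |>.trans (hbound s (hmem s hs))
    rw [Pi.neg_apply]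
    nlinarith [exp_pos (-g s)]
  have ha : a ∈ Set.Icc a b := Set.left_mem_Icc.2 hab
  have hb : b ∈ Set.Icc a b := Set.right_mem_Icc.2 hab
  constructor
  · have := hup ha hb hab
    calc E a * exp (-(g b - g a)) = E a * exp (g a) * exp (-g b) := by
          rw [mul_assoc, ← exp_add]; ring_nf
      _ ≤ E b * exp (g b) * exp (-g b) := by gcongr
      _ = E b := by rw [mul_assoc, ← exp_add, add_neg_cancel, exp_zero, mul_one]
  · have := hdown ha hb hab
    calc E b = E b * exp (-g b) * exp (g b) := by
          rw [mul_assoc, ← exp_add, neg_add_cancel, exp_zero, mul_one]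
      _ ≤ E a * exp (-g a) * exp (g b) := by gcongr
      _ = E a * exp (g b - g a) := by rw [mul_assoc, ← exp_add]; ring_nf

theorem inv_exp_mul_le_and_le_exp_mul_of_abs_mul_deriv_le {E E' : ℝ → ℝ} {t T C δ : ℝ}
    (ht : 0 < t) (htT : t ≤ T) (hδ : 0 < δ) (hC : 0 ≤ C) (hEt : 0 ≤ E t)
    (hE : ∀ s ∈ Set.Icc t T, HasDerivAt E (E' s) s)
    (hbound : ∀ s ∈ Set.Icc t T, |s * E' s| ≤ C * (s / T) ^ δ * E s) :
    (exp (C / δ))⁻¹ * E t ≤ E T ∧ E T ≤ exp (C / δ) * E t := by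
  have hT : 0 < T := ht.trans_le htT
  set g : ℝ → ℝ := fun s => C / δ * (s / T) ^ δ
  have hg : ∀ s ∈ Set.Icc t T, HasDerivAt g (C * (s / T) ^ δ / s) s := fun s hs => by
    have hs : 0 < s := ht.trans_le hs.1
    refine ((((hasDerivAt_id' s).div_const T).rpow_const (Or.inl (div_pos hs hT).ne')).const_mul
      (C / δ)).congr_deriv ?_
    rw [rpow_sub_one (div_pos hs hT).ne']
    field_simp
  have hgap : g T - g t ≤ C / δ := by
    have hx0 : 0 ≤ (t / T) ^ δ := rpow_nonneg (div_pos ht hT).le _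
    simp only [g, div_self hT.ne', one_rpow, mul_one]
    nlinarith [div_nonneg hC hδ.le]
  obtain ⟨hlow, hup⟩ := mul_exp_neg_le_and_le_mul_exp_of_abs_deriv_le htT hE hg fun s hs => by
    have hbs := hbound s hs
    have hs : 0 < s := ht.trans_le hs.1
    rw [abs_mul, abs_of_pos hs] at hbs
    rw [div_mul_eq_mul_div, le_div_iff₀ hs]
    linarith
  constructor
  · calc (exp (C / δ))⁻¹ * E t ≤ E t * exp (-(g T - g t)) := by
          rw [← exp_neg, mul_comm]; gcongr
      _ ≤ E T := hlow
  · calc E T ≤ E t * exp (g T - g t) := hup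
      _ ≤ exp (C / δ) * E t := by rw [mul_comm]; gcongr

/-- The exponent `q` in `G_i^j(t) ≤ (2/δ) t_{λ*}^{2p_i-2p_j} (t/t_{λ*})^{-q}` (`abs_Gfun_le`): any
`q ≥ 2(p_j - p_i)` with `q > 0` would do, and `q ≥ δ/2` keeps `1/q ≤ 2/δ`, also in the logarithmic
case `p_i = p_j`. -/
noncomputable def blowupRate {D : ℕ} (p : Fin D → ℝ) (δ : ℝ) (i j : Fin D) : ℝ :=
  max (2 * (p j - p i)) (δ / 2)

section Gfun
variable {D : ℕ} {p : Fin D → ℝ} {δ tstar t : ℝ}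

theorem blowupRate_pos (hδ : 0 < δ) (i j : Fin D) : 0 < blowupRate p δ i j :=
  lt_max_of_lt_right (by linarith)

theorem blowupRate_self (hδ : 0 < δ) (i : Fin D) : blowupRate p δ i i = δ / 2 := by
  simp only [blowupRate, sub_self, mul_zero]
  exact max_eq_right (by linarith)

theorem abs_Gfun_le (hδ : 0 < δ) (ht : 0 < t) (hts : t ≤ tstar) (i j : Fin D) :
    |Gfun p tstar i j t| ≤
      2 / δ * tstar ^ (2 * p i - 2 * p j) * (t / tstar) ^ (-blowupRate p δ i j) := by
  have htstar : 0 < tstar := ht.trans_le hts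
  have hq := blowupRate_pos (p := p) hδ i j
  have hG := integral_rpow_sub_one_le (e := 2 * p i - 2 * p j) ht hts hq
    (by unfold blowupRate; linarith [le_max_left (2 * (p j - p i)) (δ / 2)])
  have hG0 : 0 ≤ Gfun p tstar i j t :=
    integral_nonneg hts fun s hs => rpow_nonneg (ht.le.trans hs.1) _
  have hqδ : 1 / blowupRate p δ i j ≤ 2 / δ := by
    rw [div_le_div_iff₀ hq hδ, blowupRate]
    linarith [le_max_right (2 * (p j - p i)) (δ / 2)]
  rw [abs_of_nonneg hG0]
  refine hG.trans ?_
  rw [div_eq_mul_one_div _ (blowupRate p δ i j), mul_comm, ← mul_assoc]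
  gcongr

theorem hasDerivAt_Gfun (ht : 0 < t) (htstar : 0 < tstar) (i j : Fin D) :
    HasDerivAt (Gfun p tstar i j) (-(t ^ (2 * p i - 2 * p j - 1))) t :=
  hasDerivAt_integral_rpow_left ht htstar

end Gfun

section Energy
variable {D : ℕ} {p : Fin D → ℝ} {tstar : ℝ} {η κ : ℝ → Fin D → Fin D → ℝ} {φ ψ : ℝ → ℝ}
  {t S : ℝ}

theorem ElowSys_nonneg (htstar : 0 < tstar) : 0 ≤ ElowSys p tstar η κ φ ψ t := by
  unfold ElowSys; positivity

theorem weighted_term_le_ElowSys (htstar : 0 < tstar) (i j : Fin D) :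
    tstar ^ (-(2 * p i) + 2 * p j) * (κ t i j ^ 2 + UpsT p tstar η κ t i j ^ 2) ≤
      ElowSys p tstar η κ φ ψ t := by
  have hrow := Finset.single_le_sum (f := fun j => tstar ^ (-(2 * p i) + 2 * p j) *
    (κ t i j ^ 2 + UpsT p tstar η κ t i j ^ 2)) (fun _ _ => by positivity) (Finset.mem_univ j)
  have hall := Finset.single_le_sum (f := fun i => ∑ j, tstar ^ (-(2 * p i) + 2 * p j) *
    (κ t i j ^ 2 + UpsT p tstar η κ t i j ^ 2)) (fun _ _ => by positivity) (Finset.mem_univ i)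
  unfold ElowSys
  nlinarith

theorem sq_psi_add_sq_phiT_le_ElowSys (htstar : 0 < tstar) :
    ψ t ^ 2 + phiT φ ψ tstar t ^ 2 ≤ ElowSys p tstar η κ φ ψ t := by
  unfold ElowSys
  have : 0 ≤ ∑ i, ∑ j, tstar ^ (-(2 * p i) + 2 * p j) *
    (κ t i j ^ 2 + UpsT p tstar η κ t i j ^ 2) := by positivity
  linarith

variable (hE : ElowSys p tstar η κ φ ψ t ≤ S ^ 2) (hS : 0 ≤ S) (htstar : 0 < tstar)
include hE hS htstar

theorem abs_kappa_le (i j : Fin D) : |κ t i j| ≤ tstar ^ (p i - p j) * S :=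
  abs_le_rpow_mul_of_rpow_mul_sq_le (b := -(2 * p i) + 2 * p j) htstar (by ring) hS <|
    le_trans (by gcongr; nlinarith)
      ((weighted_term_le_ElowSys (φ := φ) (ψ := ψ) htstar i j).trans hE)

theorem abs_upsT_le (i j : Fin D) : |UpsT p tstar η κ t i j| ≤ tstar ^ (p i - p j) * S :=
  abs_le_rpow_mul_of_rpow_mul_sq_le (b := -(2 * p i) + 2 * p j) htstar (by ring) hS <|
    le_trans (by gcongr; nlinarith)
      ((weighted_term_le_ElowSys (φ := φ) (ψ := ψ) htstar i j).trans hE)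

theorem abs_psi_le : |ψ t| ≤ S :=
  abs_le_of_sq_le_sq (by nlinarith [(sq_psi_add_sq_phiT_le_ElowSys htstar).trans hE]) hS

theorem abs_phiT_le : |phiT φ ψ tstar t| ≤ S :=
  abs_le_of_sq_le_sq (by nlinarith [(sq_psi_add_sq_phiT_le_ElowSys htstar).trans hE]) hS

end Energy

noncomputable def etaConst (δ : ℝ) : ℝ := 1 + 2 / δ

theorem etaConst_pos {δ : ℝ} (hδ : 0 < δ) : 0 < etaConst δ := by unfold etaConst; positivity

theorem abs_eta_le {D : ℕ} {p : Fin D → ℝ} {δ tstar : ℝ} {η κ : ℝ → Fin D → Fin D → ℝ}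
    {φ ψ : ℝ → ℝ} {t S : ℝ} (hδ : 0 < δ) (ht : 0 < t) (hts : t ≤ tstar)
    (hE : ElowSys p tstar η κ φ ψ t ≤ S ^ 2) (hS : 0 ≤ S) (c d : Fin D) :
    |η t c d| ≤ etaConst δ * (t / tstar) ^ (-blowupRate p δ c d) * tstar ^ (p c - p d) * S := by
  have htstar : 0 < tstar := ht.trans_le hts
  have hx1 : 1 ≤ (t / tstar) ^ (-blowupRate p δ c d) :=
    one_le_rpow_of_pos_of_le_one_of_nonpos (by positivity) (div_le_one_of_le₀ hts htstar.le)
      (by linarith [blowupRate_pos (p := p) hδ c d])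
  have hw : tstar ^ (2 * p c - 2 * p d) * tstar ^ (p d - p c) = tstar ^ (p c - p d) := by
    rw [← rpow_add htstar]; ring_nf
  have hGκ : |Gfun p tstar c d t * κ t d c| ≤
      2 / δ * (t / tstar) ^ (-blowupRate p δ c d) * tstar ^ (p c - p d) * S := by
    rw [abs_mul, ← hw]
    calc _ ≤ (2 / δ * tstar ^ (2 * p c - 2 * p d) * (t / tstar) ^ (-blowupRate p δ c d)) *
          (tstar ^ (p d - p c) * S) := by
          gcongr
          exacts [abs_Gfun_le hδ ht hts c d, abs_kappa_le hE hS htstar d c]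
      _ = _ := by ring
  have hΥ := abs_upsT_le hE hS htstar c d
  calc |η t c d| = |UpsT p tstar η κ t c d - Gfun p tstar c d t * κ t d c| := by
        rw [UpsT, add_sub_cancel_right]
    _ ≤ tstar ^ (p c - p d) * S +
        2 / δ * (t / tstar) ^ (-blowupRate p δ c d) * tstar ^ (p c - p d) * S :=
        (abs_sub _ _).trans (add_le_add hΥ hGκ)
    _ ≤ _ := by
        unfold etaConst
        have : 0 ≤ tstar ^ (p c - p d) * S := by positivity
        nlinarith

section Frequency
variable {D : ℕ} {p : Fin D → ℝ} {lam : Fin D → ℤ} {tstar t : ℝ}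

theorem tau_sq (ht : 0 ≤ t) : tau p lam t ^ 2 = ∑ b, t ^ (2 - 2 * p b) * (lam b : ℝ) ^ 2 :=
  sq_sqrt (by positivity)

theorem abs_lam_le (htstar : 0 < tstar) (htau : tau p lam tstar = 1) (b : Fin D) :
    |(lam b : ℝ)| ≤ tstar ^ (p b - 1) := by
  have hsum : ∑ b, tstar ^ (2 - 2 * p b) * (lam b : ℝ) ^ 2 = 1 := by
    rw [← tau_sq htstar.le, htau, one_pow]
  have hb : tstar ^ (2 - 2 * p b) * (lam b : ℝ) ^ 2 ≤ 1 ^ 2 := by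
    rw [one_pow, ← hsum]
    exact Finset.single_le_sum (f := fun b => tstar ^ (2 - 2 * p b) * (lam b : ℝ) ^ 2)
      (fun _ _ => by positivity) (Finset.mem_univ b)
  simpa using abs_le_rpow_mul_of_rpow_mul_sq_le htstar (by ring) zero_le_one hb

theorem tau_sq_le {δ : ℝ} (hp1 : ∀ b, δ ≤ 1 - p b) (htau : tau p lam tstar = 1) (ht : 0 < t)
    (hts : t ≤ tstar) : tau p lam t ^ 2 ≤ (t / tstar) ^ (2 * δ) := by
  have htstar : 0 < tstar := ht.trans_le hts
  have hx1 : t / tstar ≤ 1 := div_le_one_of_le₀ hts htstar.le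
  calc tau p lam t ^ 2
      = ∑ b, (t / tstar) ^ (2 - 2 * p b) * (tstar ^ (2 - 2 * p b) * (lam b : ℝ) ^ 2) := by
        rw [tau_sq ht.le]
        refine Finset.sum_congr rfl fun b _ => ?_
        rw [← mul_assoc, ← mul_rpow (by positivity) htstar.le, div_mul_cancel₀ _ htstar.ne']
    _ ≤ ∑ b, (t / tstar) ^ (2 * δ) * (tstar ^ (2 - 2 * p b) * (lam b : ℝ) ^ 2) := by
        refine Finset.sum_le_sum fun b _ => mul_le_mul_of_nonneg_right ?_ (by positivity)
        exact rpow_le_rpow_of_exponent_ge (by positivity) hx1 (by linarith [hp1 b])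
    _ = (t / tstar) ^ (2 * δ) := by
        rw [← Finset.mul_sum, ← tau_sq htstar.le, htau, one_pow, mul_one]

theorem abs_rpow_mul_lam_mul_lam_mul_le (htau : tau p lam tstar = 1) (ht : 0 < t)
    (hts : t ≤ tstar) {f K S r ω ω' e : ℝ} (hK : 0 ≤ K) (hS : 0 ≤ S) (w u v : Fin D)
    (hf : |f| ≤ K * (t / tstar) ^ (-r) * tstar ^ ω * S) (he : e ≤ 2 - 2 * p w - r)
    (hω : p u + p v - 2 * p w + ω = ω') :
    |t ^ (2 - 2 * p w) * lam u * lam v * f| ≤ K * (t / tstar) ^ e * tstar ^ ω' * S := by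
  have htstar : 0 < tstar := ht.trans_le hts
  have hx0 : 0 < t / tstar := by positivity
  have hsplit : t ^ (2 - 2 * p w) = (t / tstar) ^ (2 - 2 * p w) * tstar ^ (2 - 2 * p w) := by
    rw [← mul_rpow hx0.le htstar.le, div_mul_cancel₀ _ htstar.ne']
  rw [abs_mul, abs_mul, abs_mul, abs_of_pos (by positivity), hsplit]
  calc _ ≤ (t / tstar) ^ (2 - 2 * p w) * tstar ^ (2 - 2 * p w) * tstar ^ (p u - 1) *
        tstar ^ (p v - 1) * (K * (t / tstar) ^ (-r) * tstar ^ ω * S) := by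
        gcongr
        exacts [abs_lam_le htstar htau u, abs_lam_le htstar htau v]
    _ = K * ((t / tstar) ^ (2 - 2 * p w) * (t / tstar) ^ (-r)) *
        (tstar ^ (2 - 2 * p w) * tstar ^ (p u - 1) * tstar ^ (p v - 1) * tstar ^ ω) * S := by
        ring
    _ ≤ K * (t / tstar) ^ e * tstar ^ ω' * S := by
        have hx : (t / tstar) ^ (2 - 2 * p w) * (t / tstar) ^ (-r) ≤ (t / tstar) ^ e := by
          rw [← rpow_add hx0]
          exact rpow_le_rpow_of_exponent_ge hx0 (div_le_one_of_le₀ hts htstar.le) (by linarith)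
        have hT : tstar ^ (2 - 2 * p w) * tstar ^ (p u - 1) * tstar ^ (p v - 1) * tstar ^ ω =
            tstar ^ ω' := by
          rw [← rpow_add htstar, ← rpow_add htstar, ← rpow_add htstar, ← hω]
          ring_nf
        rw [hT]
        gcongr

end Frequency

noncomputable def nuConst (D : ℕ) (δ : ℝ) : ℝ := 2 * (D + D ^ 2) * etaConst δ

theorem nuConst_nonneg {D : ℕ} {δ : ℝ} (hδ : 0 < δ) : 0 ≤ nuConst D δ := by
  have := etaConst_pos hδ; unfold nuConst; positivity

theorem abs_nu_le {D : ℕ} {p : Fin D → ℝ} {lam : Fin D → ℤ} {δ tstar t S : ℝ}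
    {η κ : ℝ → Fin D → Fin D → ℝ} {φ ψ ν : ℝ → ℝ} (hδ : 0 < δ) (hp1 : ∀ b, δ ≤ 1 - p b)
    (htau : tau p lam tstar = 1) (ht : 0 < t) (hts : t ≤ tstar)
    (hE : ElowSys p tstar η κ φ ψ t ≤ S ^ 2) (hS : 0 ≤ S)
    (hν : (1 + tau p lam t ^ 2) * ν t = 2 * tau p lam t ^ 2 * (∑ a, η t a a)
      - 2 * ∑ a, ∑ i, t ^ (2 - 2 * p a) * (lam a : ℝ) * (lam i : ℝ) * η t a i) :
    |ν t| ≤ nuConst D δ * (t / tstar) ^ (3 * δ / 2) * S := by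
  have hx0 : 0 < t / tstar := div_pos ht (ht.trans_le hts)
  have hK := (etaConst_pos hδ).le
  have htr : |∑ a, η t a a| ≤ D * (etaConst δ * (t / tstar) ^ (-(δ / 2)) * S) :=
    abs_sum_le_card_mul fun a => by
      simpa [blowupRate_self hδ] using abs_eta_le hδ ht hts hE hS a a
  have hrate : ∀ a i, 3 * δ / 2 ≤ 2 - 2 * p a - blowupRate p δ a i := fun a i => by
    rw [blowupRate, le_sub_comm]
    exact max_le (by linarith [hp1 i]) (by linarith [hp1 a])
  have hcross : |∑ a, ∑ i, t ^ (2 - 2 * p a) * (lam a : ℝ) * (lam i : ℝ) * η t a i| ≤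
      D * (D * (etaConst δ * (t / tstar) ^ (3 * δ / 2) * S)) :=
    abs_sum_le_card_mul fun a => abs_sum_le_card_mul fun i => by
      simpa using abs_rpow_mul_lam_mul_lam_mul_le htau ht hts hK hS a a i
        (abs_eta_le hδ ht hts hE hS a i) (hrate a i) (ω' := 0) (by ring)
  have hτ := tau_sq_le hp1 htau ht hts
  have hpow : (t / tstar) ^ (2 * δ) * (t / tstar) ^ (-(δ / 2)) = (t / tstar) ^ (3 * δ / 2) := by
    rw [← rpow_add hx0]; ring_nf
  calc |ν t| ≤ |(1 + tau p lam t ^ 2) * ν t| := by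
        rw [abs_mul, abs_of_pos (by positivity : (0 : ℝ) < 1 + tau p lam t ^ 2)]
        exact le_mul_of_one_le_left (abs_nonneg _) (by nlinarith)
    _ ≤ 2 * tau p lam t ^ 2 * |∑ a, η t a a| +
        2 * |∑ a, ∑ i, t ^ (2 - 2 * p a) * (lam a : ℝ) * (lam i : ℝ) * η t a i| := by
        rw [hν]
        refine (abs_sub _ _).trans_eq ?_
        rw [abs_mul, abs_mul, abs_mul, abs_of_nonneg (sq_nonneg (tau p lam t)), abs_two]
    _ ≤ 2 * (t / tstar) ^ (2 * δ) * (D * (etaConst δ * (t / tstar) ^ (-(δ / 2)) * S)) +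
        2 * (D * (D * (etaConst δ * (t / tstar) ^ (3 * δ / 2) * S))) := by gcongr
    _ = nuConst D δ * (t / tstar) ^ (3 * δ / 2) * S := by
        rw [nuConst, ← hpow]; ring

noncomputable def kappaRhs {D : ℕ} (p : Fin D → ℝ) (lam : Fin D → ℤ)
    (η : ℝ → Fin D → Fin D → ℝ) (ν : ℝ → ℝ) (t : ℝ) (i j : Fin D) : ℝ :=
  -(tau p lam t ^ 2) * η t i j
    - t ^ (2 - 2 * p j) * (lam i : ℝ) * (lam j : ℝ) * (∑ a, η t a a)
    + (∑ a, t ^ (2 - 2 * p a) * (lam i : ℝ) * (lam a : ℝ) * η t a j)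
    + t ^ (2 - 2 * p j) * (lam j : ℝ) * (∑ b, (lam b : ℝ) * η t i b)
    + t ^ (2 - 2 * p j) * (lam i : ℝ) * (lam j : ℝ) * ν t
    + p i * (if i = j then 1 else 0) * ν t

/-- `kappaRhs` is the sum of these over `b` plus the `ν` terms (`kappaRhs_eq`). The summands with
`b = i` or `b = j` cancel identically, and only there can the exponent count fail: for `b ∉ {i, j}`
each of the four couplings decays by δ-subcriticality (`abs_kappaRhsTerm_le`). -/
noncomputable def kappaRhsTerm {D : ℕ} (p : Fin D → ℝ) (lam : Fin D → ℤ)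
    (η : ℝ → Fin D → Fin D → ℝ) (t : ℝ) (i j b : Fin D) : ℝ :=
  t ^ (2 - 2 * p b) * (lam i : ℝ) * (lam b : ℝ) * η t b j
    - t ^ (2 - 2 * p b) * (lam b : ℝ) ^ 2 * η t i j
    + t ^ (2 - 2 * p j) * (lam j : ℝ) * (lam b : ℝ) * η t i b
    - t ^ (2 - 2 * p j) * (lam i : ℝ) * (lam j : ℝ) * η t b b

noncomputable def kappaConst (D : ℕ) (p : Fin D → ℝ) (δ : ℝ) : ℝ :=
  4 * D * etaConst δ + (1 + ∑ b, |p b|) * nuConst D δ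

theorem kappaConst_nonneg {D : ℕ} {p : Fin D → ℝ} {δ : ℝ} (hδ : 0 < δ) :
    0 ≤ kappaConst D p δ := by
  have := nuConst_nonneg (D := D) hδ; have := etaConst_pos hδ; unfold kappaConst; positivity

section KappaRhs
variable {D : ℕ} {p : Fin D → ℝ} {lam : Fin D → ℤ} {δ tstar t S : ℝ}
  {η κ : ℝ → Fin D → Fin D → ℝ} {φ ψ ν : ℝ → ℝ}

theorem kappaRhs_eq (ht : 0 ≤ t) (i j : Fin D) :
    kappaRhs p lam η ν t i j = ∑ b, kappaRhsTerm p lam η t i j b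
      + t ^ (2 - 2 * p j) * lam i * lam j * ν t + p i * (if i = j then 1 else 0) * ν t := by
  simp only [kappaRhs, kappaRhsTerm, tau_sq ht, neg_mul, Finset.sum_add_distrib,
    Finset.sum_sub_distrib, Finset.mul_sum, Finset.sum_mul, ← mul_assoc]
  ring

theorem kappaRhsTerm_self_left (i j : Fin D) : kappaRhsTerm p lam η t i j i = 0 := by
  unfold kappaRhsTerm; ring

theorem kappaRhsTerm_self_right (i j : Fin D) : kappaRhsTerm p lam η t i j j = 0 := by
  unfold kappaRhsTerm; ring

theorem abs_kappaRhsTerm_le (hδ : 0 < δ) (hp1 : ∀ b, δ ≤ 1 - p b)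
    (hsub : ∀ i j k : Fin D, j ≠ k → δ ≤ 1 + p i - p j - p k) (htau : tau p lam tstar = 1)
    (ht : 0 < t) (hts : t ≤ tstar) (hE : ElowSys p tstar η κ φ ψ t ≤ S ^ 2) (hS : 0 ≤ S)
    (i j b : Fin D) :
    |kappaRhsTerm p lam η t i j b| ≤
      4 * etaConst δ * (t / tstar) ^ (δ + blowupRate p δ j i) * tstar ^ (p i - p j) * S := by
  have htstar : 0 < tstar := ht.trans_le hts
  have hK := (etaConst_pos hδ).le
  by_cases hbi : b = i
  · rw [hbi, kappaRhsTerm_self_left, abs_zero]; positivity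
  by_cases hbj : b = j
  · rw [hbj, kappaRhsTerm_self_right, abs_zero]; positivity
  have hterm := fun w u v c d => abs_rpow_mul_lam_mul_lam_mul_le (lam := lam) htau ht hts hK hS
    (e := δ + blowupRate p δ j i) (ω' := p i - p j) w u v (abs_eta_le hδ ht hts hE hS c d)
  have h1 := hterm b i b b j (by
    unfold blowupRate; apply add_max_le_sub_max <;>
      linarith [hsub j i b (Ne.symm hbi), hp1 i, hp1 j, hp1 b]) (by ring)
  have h2 := hterm b b b i j (by
    unfold blowupRate; apply add_max_le_sub_max <;>
      linarith [hsub i b j hbj, hsub j b i hbi, hp1 b]) (by ring)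
  have h3 := hterm j j b i b (by
    unfold blowupRate; apply add_max_le_sub_max <;>
      linarith [hsub i j b (Ne.symm hbj), hp1 i, hp1 b, hp1 j]) (by ring)
  have h4 := hterm j i j b b (by
    unfold blowupRate; apply add_max_le_sub_max <;> linarith [hp1 i, hp1 j]) (by ring)
  rw [mul_assoc (t ^ (2 - 2 * p b)), ← sq] at h2
  unfold kappaRhsTerm
  have habs : ∀ a b c d : ℝ, |a - b + c - d| ≤ |a| + |b| + |c| + |d| := fun a b c d => by
    linarith [abs_sub a b, abs_add_le (a - b) c, abs_sub (a - b + c) d]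
  linarith [habs (t ^ (2 - 2 * p b) * lam i * lam b * η t b j)
    (t ^ (2 - 2 * p b) * (lam b : ℝ) ^ 2 * η t i j) (t ^ (2 - 2 * p j) * lam j * lam b * η t i b)
    (t ^ (2 - 2 * p j) * lam i * lam j * η t b b)]

theorem abs_diag_mul_nu_le (hδ : 0 < δ) (ht : 0 < t) (htstar : 0 < tstar) (hS : 0 ≤ S)
    (hν : |ν t| ≤ nuConst D δ * (t / tstar) ^ (3 * δ / 2) * S) (i j : Fin D) :
    |p i * (if i = j then 1 else 0) * ν t| ≤
      (∑ b, |p b|) * nuConst D δ * (t / tstar) ^ (δ + blowupRate p δ j i) *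
        tstar ^ (p i - p j) * S := by
  have hpi : |p i| ≤ ∑ b, |p b| :=
    Finset.single_le_sum (f := fun b => |p b|) (fun _ _ => abs_nonneg _) (Finset.mem_univ i)
  split_ifs with hij
  · subst hij
    rw [mul_one, abs_mul, blowupRate_self hδ, sub_self, rpow_zero, mul_one,
      show δ + δ / 2 = 3 * δ / 2 by ring, mul_assoc, mul_assoc]
    exact mul_le_mul hpi (hν.trans_eq (by ring)) (abs_nonneg _) ((abs_nonneg _).trans hpi)
  · simp only [mul_zero, zero_mul, abs_zero]
    have := nuConst_nonneg (D := D) hδ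
    positivity

theorem abs_kappaRhs_le (hδ : 0 < δ) (hp1 : ∀ b, δ ≤ 1 - p b)
    (hsub : ∀ i j k : Fin D, j ≠ k → δ ≤ 1 + p i - p j - p k) (htau : tau p lam tstar = 1)
    (ht : 0 < t) (hts : t ≤ tstar) (hE : ElowSys p tstar η κ φ ψ t ≤ S ^ 2) (hS : 0 ≤ S)
    (hν : |ν t| ≤ nuConst D δ * (t / tstar) ^ (3 * δ / 2) * S) (i j : Fin D) :
    |kappaRhs p lam η ν t i j| ≤
      kappaConst D p δ * (t / tstar) ^ (δ + blowupRate p δ j i) * tstar ^ (p i - p j) * S := by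
  set M := (t / tstar) ^ (δ + blowupRate p δ j i) * tstar ^ (p i - p j) * S with hM
  have htstar : 0 < tstar := ht.trans_le hts
  have hM0 : 0 ≤ M := by positivity
  have hCν := nuConst_nonneg (D := D) hδ
  have hterms : |∑ b, kappaRhsTerm p lam η t i j b| ≤ D * (4 * etaConst δ * M) :=
    abs_sum_le_card_mul fun b => by
      simpa only [hM, mul_assoc] using abs_kappaRhsTerm_le hδ hp1 hsub htau ht hts hE hS i j b
  have hrate : δ + blowupRate p δ j i ≤ 2 - 2 * p j - -(3 * δ / 2) := by
    rw [blowupRate, sub_neg_eq_add, ← le_sub_iff_add_le']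
    exact max_le (by linarith [hp1 i]) (by linarith [hp1 j])
  have hshift : |t ^ (2 - 2 * p j) * lam i * lam j * ν t| ≤ nuConst D δ * M := by
    simpa only [hM, mul_assoc] using abs_rpow_mul_lam_mul_lam_mul_le htau ht hts hCν hS j i j
      (ω := 0) (by simpa using hν) hrate (by ring)
  have hdiag : |p i * (if i = j then 1 else 0) * ν t| ≤ (∑ b, |p b|) * nuConst D δ * M := by
    simpa only [hM, mul_assoc] using abs_diag_mul_nu_le hδ ht htstar hS hν i j
  rw [kappaRhs_eq ht.le]
  calc _ ≤ D * (4 * etaConst δ * M) + nuConst D δ * M + (∑ b, |p b|) * nuConst D δ * M :=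
        (abs_add_le _ _).trans (add_le_add ((abs_add_le _ _).trans (add_le_add hterms hshift))
          hdiag)
    _ = kappaConst D p δ * M := by rw [kappaConst]; ring
    _ = _ := by rw [hM]; ring

end KappaRhs

noncomputable def upsRhs {D : ℕ} (p : Fin D → ℝ) (lam : Fin D → ℤ) (tstar : ℝ)
    (η : ℝ → Fin D → Fin D → ℝ) (ν : ℝ → ℝ) (t : ℝ) (i j : Fin D) : ℝ :=
  -(p i * (if i = j then 1 else 0) * ν t) + Gfun p tstar i j t * kappaRhs p lam η ν t j i

noncomputable def psiRhs {D : ℕ} (p : Fin D → ℝ) (pphi : ℝ) (lam : Fin D → ℤ) (φ ν : ℝ → ℝ)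
    (t : ℝ) : ℝ :=
  -(tau p lam t ^ 2) * φ t - pphi * ν t

noncomputable def phiTRhs {D : ℕ} (p : Fin D → ℝ) (pphi : ℝ) (lam : Fin D → ℤ) (tstar : ℝ)
    (φ ν : ℝ → ℝ) (t : ℝ) : ℝ :=
  pphi * ν t + Real.log (tstar / t) * psiRhs p pphi lam φ ν t

section Derivatives
variable {D : ℕ} {p : Fin D → ℝ} {pphi : ℝ} {lam : Fin D → ℤ} {tstar t : ℝ}
  {η κ : ℝ → Fin D → Fin D → ℝ} {φ ψ ν : ℝ → ℝ} {I : Set ℝ}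

theorem eq_rpow_mul_of_rpow_neg_mul_eq {a b X Y : ℝ} (ht : 0 < t)
    (h : t ^ (-a) * X = t ^ (-b) * Y) : X = t ^ (a - b) * Y := by
  calc X = t ^ a * (t ^ (-a) * X) := by rw [← mul_assoc, ← rpow_add ht, add_neg_cancel,
          rpow_zero, one_mul]
    _ = t ^ (a - b) * Y := by rw [h, ← mul_assoc, ← rpow_add ht, ← sub_eq_add_neg]

theorem IsCMCTCSolution.kappa_add_eq (sol : IsCMCTCSolution p pphi lam η κ φ ψ ν I)
    (htI : t ∈ I) (ht : 0 < t) (i j : Fin D) :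
    κ t i j + 2 * (p i - p j) * η t i j = t ^ (2 * p i - 2 * p j) * κ t j i := by
  have hη := eq_rpow_mul_of_rpow_neg_mul_eq ht (sol.sym_eta t htI i j)
  have hκ := eq_rpow_mul_of_rpow_neg_mul_eq ht (sol.sym_kappa t htI i j)
  linear_combination hκ - 2 * p j * hη

theorem IsCMCTCSolution.hasDerivAt_upsT (sol : IsCMCTCSolution p pphi lam η κ φ ψ ν I)
    (htI : t ∈ I) (ht : 0 < t) (htstar : 0 < tstar) (i j : Fin D) :
    HasDerivAt (fun s => UpsT p tstar η κ s i j) (upsRhs p lam tstar η ν t i j / t) t := by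
  have hκ : HasDerivAt (fun s => κ s j i) (kappaRhs p lam η ν t j i / t) t :=
    sol.kappa_evol t htI j i
  refine ((sol.eta_evol t htI i j).add ((hasDerivAt_Gfun ht htstar i j).mul hκ)).congr_deriv ?_
  rw [sol.kappa_add_eq htI ht i j, rpow_sub_one ht.ne', upsRhs]
  ring

theorem IsCMCTCSolution.hasDerivAt_phiT (sol : IsCMCTCSolution p pphi lam η κ φ ψ ν I)
    (htI : t ∈ I) (ht : 0 < t) (htstar : 0 < tstar) :
    HasDerivAt (fun s => phiT φ ψ tstar s) (phiTRhs p pphi lam tstar φ ν t / t) t := by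
  have hlog : HasDerivAt (fun s => Real.log (tstar / s)) (-t⁻¹) t := by
    refine (((hasDerivAt_const t tstar).div (hasDerivAt_id' t) ht.ne').log
      (div_pos htstar ht).ne').congr_deriv ?_
    simp only [Pi.div_apply]
    field_simp
    ring
  refine ((sol.phi_evol t htI).add (hlog.mul (sol.psi_evol t htI))).congr_deriv ?_
  rw [phiTRhs, psiRhs]
  field_simp
  ring

end Derivatives

noncomputable def upsConst (D : ℕ) (p : Fin D → ℝ) (δ : ℝ) : ℝ :=
  (∑ b, |p b|) * nuConst D δ + 2 / δ * kappaConst D p δ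

noncomputable def psiConst (D : ℕ) (pphi δ : ℝ) : ℝ := etaConst δ + |pphi| * nuConst D δ

noncomputable def phiTConst (D : ℕ) (pphi δ : ℝ) : ℝ :=
  |pphi| * nuConst D δ + 2 / δ * psiConst D pphi δ

section Rhs
variable {D : ℕ} {p : Fin D → ℝ} {pphi : ℝ} {lam : Fin D → ℤ} {δ tstar t S : ℝ}
  {η κ : ℝ → Fin D → Fin D → ℝ} {φ ψ ν : ℝ → ℝ}

theorem abs_upsRhs_le (hδ : 0 < δ) (hp1 : ∀ b, δ ≤ 1 - p b)
    (hsub : ∀ i j k : Fin D, j ≠ k → δ ≤ 1 + p i - p j - p k) (htau : tau p lam tstar = 1)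
    (ht : 0 < t) (hts : t ≤ tstar) (hE : ElowSys p tstar η κ φ ψ t ≤ S ^ 2) (hS : 0 ≤ S)
    (hν : |ν t| ≤ nuConst D δ * (t / tstar) ^ (3 * δ / 2) * S) (i j : Fin D) :
    |upsRhs p lam tstar η ν t i j| ≤
      upsConst D p δ * (t / tstar) ^ δ * tstar ^ (p i - p j) * S := by
  have htstar : 0 < tstar := ht.trans_le hts
  have hx0 : 0 < t / tstar := div_pos ht htstar
  have hx1 : t / tstar ≤ 1 := div_le_one_of_le₀ hts htstar.le
  have hdiag : |p i * (if i = j then 1 else 0) * ν t| ≤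
      (∑ b, |p b|) * nuConst D δ * (t / tstar) ^ δ * tstar ^ (p i - p j) * S := by
    refine (abs_diag_mul_nu_le hδ ht htstar hS hν i j).trans ?_
    have := nuConst_nonneg (D := D) hδ
    gcongr _ * _ * ?_ * _ * _
    exact rpow_le_rpow_of_exponent_ge hx0 hx1 (by linarith [blowupRate_pos (p := p) hδ j i])
  have hcoupling : |Gfun p tstar i j t * kappaRhs p lam η ν t j i| ≤
      2 / δ * kappaConst D p δ * (t / tstar) ^ δ * tstar ^ (p i - p j) * S := by
    rw [abs_mul]
    calc _ ≤ (2 / δ * tstar ^ (2 * p i - 2 * p j) * (t / tstar) ^ (-blowupRate p δ i j)) *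
          (kappaConst D p δ * (t / tstar) ^ (δ + blowupRate p δ i j) * tstar ^ (p j - p i) * S) :=
          mul_le_mul (abs_Gfun_le hδ ht hts i j)
            (abs_kappaRhs_le hδ hp1 hsub htau ht hts hE hS hν j i) (abs_nonneg _) (by positivity)
      _ = 2 / δ * kappaConst D p δ *
          ((t / tstar) ^ (-blowupRate p δ i j) * (t / tstar) ^ (δ + blowupRate p δ i j)) *
          (tstar ^ (2 * p i - 2 * p j) * tstar ^ (p j - p i)) * S := by ring
      _ = _ := by rw [← rpow_add hx0, ← rpow_add htstar]; ring_nf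
  calc |upsRhs p lam tstar η ν t i j|
      ≤ |p i * (if i = j then 1 else 0) * ν t| + |Gfun p tstar i j t * kappaRhs p lam η ν t j i| :=
        (abs_add_le _ _).trans_eq (by rw [abs_neg])
    _ ≤ _ := add_le_add hdiag hcoupling
    _ = _ := by rw [upsConst]; ring

theorem abs_phi_le (hδ : 0 < δ) (ht : 0 < t) (hts : t ≤ tstar)
    (hE : ElowSys p tstar η κ φ ψ t ≤ S ^ 2) (hS : 0 ≤ S) :
    |φ t| ≤ etaConst δ * (t / tstar) ^ (-(δ / 2)) * S := by
  have htstar : 0 < tstar := ht.trans_le hts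
  have hlog0 : 0 ≤ Real.log (tstar / t) := log_nonneg ((one_le_div ht).2 hts)
  have hlog := log_div_le_rpow_neg ht htstar (half_pos hδ)
  have hx1 : 1 ≤ (t / tstar) ^ (-(δ / 2)) :=
    one_le_rpow_of_pos_of_le_one_of_nonpos (div_pos ht htstar) (div_le_one_of_le₀ hts htstar.le)
      (by linarith)
  have hψ := abs_psi_le hE hS htstar
  calc |φ t| = |phiT φ ψ tstar t - Real.log (tstar / t) * ψ t| := by
        rw [phiT, add_sub_cancel_right]
    _ ≤ S + (δ / 2)⁻¹ * (t / tstar) ^ (-(δ / 2)) * S := by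
        refine (abs_sub _ _).trans (add_le_add (abs_phiT_le hE hS htstar) ?_)
        rw [abs_mul, abs_of_nonneg hlog0]
        gcongr
    _ ≤ etaConst δ * (t / tstar) ^ (-(δ / 2)) * S := by
        rw [etaConst, inv_div]
        nlinarith [mul_le_mul_of_nonneg_right hx1 hS]

theorem abs_psiRhs_le (hδ : 0 < δ) (hp1 : ∀ b, δ ≤ 1 - p b) (htau : tau p lam tstar = 1)
    (ht : 0 < t) (hts : t ≤ tstar) (hE : ElowSys p tstar η κ φ ψ t ≤ S ^ 2) (hS : 0 ≤ S)
    (hν : |ν t| ≤ nuConst D δ * (t / tstar) ^ (3 * δ / 2) * S) :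
    |psiRhs p pphi lam φ ν t| ≤ psiConst D pphi δ * (t / tstar) ^ (3 * δ / 2) * S := by
  have hx0 : 0 < t / tstar := div_pos ht (ht.trans_le hts)
  have hpow : (t / tstar) ^ (2 * δ) * (t / tstar) ^ (-(δ / 2)) = (t / tstar) ^ (3 * δ / 2) := by
    rw [← rpow_add hx0]; ring_nf
  calc |psiRhs p pphi lam φ ν t| ≤ tau p lam t ^ 2 * |φ t| + |pphi| * |ν t| := by
        refine (abs_sub _ _).trans_eq ?_
        rw [abs_mul, abs_mul, abs_neg, abs_of_nonneg (sq_nonneg (tau p lam t))]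
    _ ≤ (t / tstar) ^ (2 * δ) * (etaConst δ * (t / tstar) ^ (-(δ / 2)) * S) +
        |pphi| * (nuConst D δ * (t / tstar) ^ (3 * δ / 2) * S) := by
        gcongr
        exacts [tau_sq_le hp1 htau ht hts, abs_phi_le hδ ht hts hE hS]
    _ = _ := by rw [psiConst, ← hpow]; ring

theorem abs_phiTRhs_le (hδ : 0 < δ) (hp1 : ∀ b, δ ≤ 1 - p b) (htau : tau p lam tstar = 1)
    (ht : 0 < t) (hts : t ≤ tstar) (hE : ElowSys p tstar η κ φ ψ t ≤ S ^ 2) (hS : 0 ≤ S)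
    (hν : |ν t| ≤ nuConst D δ * (t / tstar) ^ (3 * δ / 2) * S) :
    |phiTRhs p pphi lam tstar φ ν t| ≤ phiTConst D pphi δ * (t / tstar) ^ δ * S := by
  have htstar : 0 < tstar := ht.trans_le hts
  have hx0 : 0 < t / tstar := div_pos ht htstar
  have hlog0 : 0 ≤ Real.log (tstar / t) := log_nonneg ((one_le_div ht).2 hts)
  have hpow : (t / tstar) ^ (-(δ / 2)) * (t / tstar) ^ (3 * δ / 2) = (t / tstar) ^ δ := by
    rw [← rpow_add hx0]; ring_nf
  have hνδ : |ν t| ≤ nuConst D δ * (t / tstar) ^ δ * S := by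
    refine hν.trans ?_
    have := nuConst_nonneg (D := D) hδ
    gcongr _ * ?_ * _
    exact rpow_le_rpow_of_exponent_ge hx0 (div_le_one_of_le₀ hts htstar.le) (by linarith)
  calc |phiTRhs p pphi lam tstar φ ν t|
      ≤ |pphi| * |ν t| + Real.log (tstar / t) * |psiRhs p pphi lam φ ν t| := by
        refine (abs_add_le _ _).trans_eq ?_
        rw [abs_mul, abs_mul, abs_of_nonneg hlog0]
    _ ≤ |pphi| * (nuConst D δ * (t / tstar) ^ δ * S) + ((δ / 2)⁻¹ * (t / tstar) ^ (-(δ / 2))) *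
        (psiConst D pphi δ * (t / tstar) ^ (3 * δ / 2) * S) := by
        gcongr
        exacts [log_div_le_rpow_neg ht htstar (half_pos hδ),
          abs_psiRhs_le hδ hp1 htau ht hts hE hS hν]
    _ = _ := by rw [phiTConst, inv_div, ← hpow]; ring

end Rhs

noncomputable def energyRate {D : ℕ} (p : Fin D → ℝ) (pphi : ℝ) (lam : Fin D → ℤ) (tstar : ℝ)
    (η κ : ℝ → Fin D → Fin D → ℝ) (φ ψ ν : ℝ → ℝ) (t : ℝ) : ℝ :=
  (∑ i, ∑ j, tstar ^ (-(2 * p i) + 2 * p j) *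
      (2 * κ t i j * kappaRhs p lam η ν t i j
        + 2 * UpsT p tstar η κ t i j * upsRhs p lam tstar η ν t i j))
    + 2 * ψ t * psiRhs p pphi lam φ ν t + 2 * phiT φ ψ tstar t * phiTRhs p pphi lam tstar φ ν t

noncomputable def rateConst (D : ℕ) (p : Fin D → ℝ) (pphi δ : ℝ) : ℝ :=
  2 * (D ^ 2 * (kappaConst D p δ + upsConst D p δ) + psiConst D pphi δ + phiTConst D pphi δ)

section EnergyRate
variable {D : ℕ} {p : Fin D → ℝ} {pphi : ℝ} {lam : Fin D → ℤ} {δ tstar t S : ℝ}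
  {η κ : ℝ → Fin D → Fin D → ℝ} {φ ψ ν : ℝ → ℝ} {I : Set ℝ}

theorem IsCMCTCSolution.hasDerivAt_ElowSys (sol : IsCMCTCSolution p pphi lam η κ φ ψ ν I)
    (htI : t ∈ I) (ht : 0 < t) (htstar : 0 < tstar) :
    HasDerivAt (ElowSys p tstar η κ φ ψ) (energyRate p pphi lam tstar η κ φ ψ ν t / t) t := by
  have hterm : ∀ i j, HasDerivAt
      (fun s => tstar ^ (-(2 * p i) + 2 * p j) * (κ s i j ^ 2 + UpsT p tstar η κ s i j ^ 2))
      (tstar ^ (-(2 * p i) + 2 * p j) * (2 * κ t i j * kappaRhs p lam η ν t i j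
        + 2 * UpsT p tstar η κ t i j * upsRhs p lam tstar η ν t i j) / t) t := fun i j => by
    have hκ : HasDerivAt (fun s => κ s i j) (kappaRhs p lam η ν t i j / t) t :=
      sol.kappa_evol t htI i j
    refine ((hκ.pow 2).add ((sol.hasDerivAt_upsT htI ht htstar i j).pow 2)).const_mul _
      |>.congr_deriv ?_
    push_cast; ring
  have hψ : HasDerivAt (fun s => ψ s ^ 2) (2 * ψ t * psiRhs p pphi lam φ ν t / t) t :=
    ((sol.psi_evol t htI).pow 2).congr_deriv (by rw [psiRhs]; push_cast; ring)
  have hφ : HasDerivAt (fun s => phiT φ ψ tstar s ^ 2)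
      (2 * phiT φ ψ tstar t * phiTRhs p pphi lam tstar φ ν t / t) t :=
    ((sol.hasDerivAt_phiT htI ht htstar).pow 2).congr_deriv (by push_cast; ring)
  refine (((HasDerivAt.fun_sum fun i _ => HasDerivAt.fun_sum fun j _ => hterm i j).add
    hψ).add hφ).congr_deriv ?_
  rw [energyRate, add_div, add_div, Finset.sum_div]
  simp only [Finset.sum_div]

theorem abs_energyRate_summand_le (hδ : 0 < δ) (hp1 : ∀ b, δ ≤ 1 - p b)
    (hsub : ∀ i j k : Fin D, j ≠ k → δ ≤ 1 + p i - p j - p k) (htau : tau p lam tstar = 1)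
    (ht : 0 < t) (hts : t ≤ tstar) (hE : ElowSys p tstar η κ φ ψ t ≤ S ^ 2) (hS : 0 ≤ S)
    (hν : |ν t| ≤ nuConst D δ * (t / tstar) ^ (3 * δ / 2) * S) (i j : Fin D) :
    |tstar ^ (-(2 * p i) + 2 * p j) * (2 * κ t i j * kappaRhs p lam η ν t i j
      + 2 * UpsT p tstar η κ t i j * upsRhs p lam tstar η ν t i j)| ≤
      2 * (kappaConst D p δ + upsConst D p δ) * (t / tstar) ^ δ * S ^ 2 := by
  have htstar : 0 < tstar := ht.trans_le hts
  have hweight : 2 * (p i - p j) + (-(2 * p i) + 2 * p j) = 0 := by ring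
  have hK : |kappaRhs p lam η ν t i j| ≤
      tstar ^ (p i - p j) * (kappaConst D p δ * (t / tstar) ^ δ * S) := by
    refine (abs_kappaRhs_le hδ hp1 hsub htau ht hts hE hS hν i j).trans ?_
    have := kappaConst_nonneg (D := D) (p := p) hδ
    calc _ ≤ kappaConst D p δ * (t / tstar) ^ δ * tstar ^ (p i - p j) * S := by
          gcongr _ * ?_ * _ * _
          exact rpow_le_rpow_of_exponent_ge (div_pos ht htstar) (div_le_one_of_le₀ hts htstar.le)
            (by linarith [blowupRate_pos (p := p) hδ j i])
      _ = _ := by ring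
  have hU : |upsRhs p lam tstar η ν t i j| ≤
      tstar ^ (p i - p j) * (upsConst D p δ * (t / tstar) ^ δ * S) :=
    (abs_upsRhs_le hδ hp1 hsub htau ht hts hE hS hν i j).trans_eq (by ring)
  have h1 := abs_rpow_mul_mul_le htstar hweight (abs_kappa_le hE hS htstar i j) hK
  have h2 := abs_rpow_mul_mul_le htstar hweight (abs_upsT_le hE hS htstar i j) hU
  set c := tstar ^ (-(2 * p i) + 2 * p j)
  calc _ = |2 * (c * (κ t i j * kappaRhs p lam η ν t i j)) +
        2 * (c * (UpsT p tstar η κ t i j * upsRhs p lam tstar η ν t i j))| := by ring_nf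
    _ ≤ 2 * |c * (κ t i j * kappaRhs p lam η ν t i j)| +
        2 * |c * (UpsT p tstar η κ t i j * upsRhs p lam tstar η ν t i j)| :=
        (abs_add_le _ _).trans_eq (by rw [abs_mul 2, abs_mul 2, abs_two])
    _ ≤ _ := by nlinarith

theorem abs_energyRate_le (hδ : 0 < δ) (hp1 : ∀ b, δ ≤ 1 - p b)
    (hsub : ∀ i j k : Fin D, j ≠ k → δ ≤ 1 + p i - p j - p k) (htau : tau p lam tstar = 1)
    (sol : IsCMCTCSolution p pphi lam η κ φ ψ ν (Set.Ioc 0 tstar)) (ht : t ∈ Set.Ioc 0 tstar)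
    (hE : ElowSys p tstar η κ φ ψ t ≤ S ^ 2) (hS : 0 ≤ S) :
    |energyRate p pphi lam tstar η κ φ ψ ν t| ≤
      rateConst D p pphi δ * (t / tstar) ^ δ * S ^ 2 := by
  obtain ⟨ht0, hts⟩ := ht
  have htstar : 0 < tstar := ht0.trans_le hts
  have hν := abs_nu_le hδ hp1 htau ht0 hts hE hS (sol.nu_elliptic t ⟨ht0, hts⟩)
  have hx : (t / tstar) ^ (3 * δ / 2) ≤ (t / tstar) ^ δ :=
    rpow_le_rpow_of_exponent_ge (div_pos ht0 htstar) (div_le_one_of_le₀ hts htstar.le)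
      (by linarith)
  have hψ := abs_psi_le hE hS htstar
  have hφ := abs_phiT_le hE hS htstar
  have hP := abs_psiRhs_le (pphi := pphi) hδ hp1 htau ht0 hts hE hS hν
  have hF := abs_phiTRhs_le (pphi := pphi) hδ hp1 htau ht0 hts hE hS hν
  have hCψ : 0 ≤ psiConst D pphi δ := by
    have := nuConst_nonneg (D := D) hδ; have := etaConst_pos hδ; unfold psiConst; positivity
  calc |energyRate p pphi lam tstar η κ φ ψ ν t|
      ≤ D * (D * (2 * (kappaConst D p δ + upsConst D p δ) * (t / tstar) ^ δ * S ^ 2)) +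
        2 * (|ψ t| * |psiRhs p pphi lam φ ν t|) +
        2 * (|phiT φ ψ tstar t| * |phiTRhs p pphi lam tstar φ ν t|) := by
        refine (abs_add_le _ _).trans (add_le_add ((abs_add_le _ _).trans (add_le_add
          (abs_sum_le_card_mul fun i => abs_sum_le_card_mul fun j =>
            abs_energyRate_summand_le hδ hp1 hsub htau ht0 hts hE hS hν i j) ?_)) ?_) <;>
        rw [abs_mul, abs_mul, abs_two, mul_assoc]
    _ ≤ D * (D * (2 * (kappaConst D p δ + upsConst D p δ) * (t / tstar) ^ δ * S ^ 2)) +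
        2 * (S * (psiConst D pphi δ * (t / tstar) ^ δ * S)) +
        2 * (S * (phiTConst D pphi δ * (t / tstar) ^ δ * S)) := by
        gcongr
        exact hP.trans (by gcongr)
    _ = _ := by rw [rateConst]; ring

end EnergyRate

theorem rateConst_pos {D : ℕ} {p : Fin D → ℝ} {pphi δ : ℝ} (hδ : 0 < δ) :
    0 < rateConst D p pphi δ := by
  have := kappaConst_nonneg (D := D) (p := p) hδ
  have := nuConst_nonneg (D := D) hδ
  have := etaConst_pos hδ
  unfold rateConst upsConst phiTConst psiConst
  positivity

theorem le_one_sub_of_subcritical {D : ℕ} {p : Fin D → ℝ} {δ : ℝ} (hD : 2 ≤ D)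
    (hsub : ∀ i j k : Fin D, j ≠ k → δ ≤ 1 + p i - p j - p k) (b : Fin D) : δ ≤ 1 - p b := by
  obtain ⟨a, hab⟩ := Fintype.exists_ne_of_one_lt_card (by rw [Fintype.card_fin]; omega) b
  linarith [hsub a a b hab]

theorem IsCMCTCSolution.abs_mul_energyRate_div_le {D : ℕ} {p : Fin D → ℝ} {pphi : ℝ}
    {lam : Fin D → ℤ} {δ tstar t : ℝ} {η κ : ℝ → Fin D → Fin D → ℝ} {φ ψ ν : ℝ → ℝ}
    (sol : IsCMCTCSolution p pphi lam η κ φ ψ ν (Set.Ioc 0 tstar)) (hδ : 0 < δ)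
    (hp1 : ∀ b, δ ≤ 1 - p b) (hsub : ∀ i j k : Fin D, j ≠ k → δ ≤ 1 + p i - p j - p k)
    (htau : tau p lam tstar = 1) (ht : t ∈ Set.Ioc 0 tstar) :
    |t * (energyRate p pphi lam tstar η κ φ ψ ν t / t)| ≤
      rateConst D p pphi δ * (t / tstar) ^ δ * ElowSys p tstar η κ φ ψ t := by
  have hE := ElowSys_nonneg (p := p) (η := η) (κ := κ) (φ := φ) (ψ := ψ) (t := t)
    (ht.1.trans_le ht.2)
  rw [mul_div_cancel₀ _ ht.1.ne', ← sq_sqrt hE]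
  exact abs_energyRate_le hδ hp1 hsub htau sol ht (sq_sqrt hE).ge (sqrt_nonneg _)

theorem einstein_low_freq_energy_estimate_general (D : ℕ) (hD : 2 ≤ D)
    (p : Fin D → ℝ) (pphi : ℝ)
    (δ : ℝ) (hδ : 0 < δ)
    (hsub : ∀ i j k : Fin D, j ≠ k → δ ≤ 1 + p i - p j - p k) :
    (∃ C : ℝ, 0 < C ∧
      ∀ (lam : Fin D → ℤ), lam ≠ 0 →
      ∀ tstar : ℝ, 0 < tstar → tstar ≤ 1 → tau p lam tstar = 1 →
      ∀ (η κ : ℝ → Fin D → Fin D → ℝ) (φ ψ ν : ℝ → ℝ),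
        IsCMCTCSolution p pphi lam η κ φ ψ ν (Set.Ioc 0 tstar) →
      ∀ t ∈ Set.Ioc (0:ℝ) tstar,
        ∃ E' : ℝ, HasDerivAt (ElowSys p tstar η κ φ ψ) E' t ∧
          |t * E'| ≤ C * (t / tstar) ^ δ * ElowSys p tstar η κ φ ψ t) ∧
    (∃ Clow : ℝ, 0 < Clow ∧
      ∀ (lam : Fin D → ℤ), lam ≠ 0 →
      ∀ tstar : ℝ, 0 < tstar → tstar ≤ 1 → tau p lam tstar = 1 →
      ∀ (η κ : ℝ → Fin D → Fin D → ℝ) (φ ψ ν : ℝ → ℝ),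
        IsCMCTCSolution p pphi lam η κ φ ψ ν (Set.Ioc 0 tstar) →
      ∀ t ∈ Set.Ioc (0:ℝ) tstar,
        Clow⁻¹ * ElowSys p tstar η κ φ ψ t ≤ ElowSys p tstar η κ φ ψ tstar ∧
        ElowSys p tstar η κ φ ψ tstar ≤ Clow * ElowSys p tstar η κ φ ψ t) := by
  have hp1 := le_one_sub_of_subcritical hD hsub
  have hC := rateConst_pos (p := p) (pphi := pphi) hδ
  refine ⟨⟨_, hC, fun lam _ tstar htstar _ htau η κ φ ψ ν sol t ht =>
    ⟨_, sol.hasDerivAt_ElowSys ht ht.1 htstar,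
      sol.abs_mul_energyRate_div_le hδ hp1 hsub htau ht⟩⟩, ⟨_, exp_pos (rateConst D p pphi δ / δ),
    fun lam _ tstar htstar _ htau η κ φ ψ ν sol t ht => ?_⟩⟩
  have hIcc : ∀ s ∈ Set.Icc t tstar, s ∈ Set.Ioc 0 tstar := fun s hs => ⟨ht.1.trans_le hs.1, hs.2⟩
  exact inv_exp_mul_le_and_le_exp_mul_of_abs_mul_deriv_le ht.1 ht.2 hδ hC.le
    (ElowSys_nonneg htstar) (fun s hs => sol.hasDerivAt_ElowSys (hIcc s hs) (hIcc s hs).1 htstar)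
    fun s hs => sol.abs_mul_energyRate_div_le hδ hp1 hsub htau (hIcc s hs)

/-- Proposition `prop:einstein_low_freq`: the low-frequency energy estimate for the
linearized Einstein–scalar field system in CMCTC gauge, under δ-subcriticality. -/
theorem einstein_low_freq_energy_estimate (D : ℕ) (hD : 2 ≤ D)
    (p : Fin D → ℝ) (pphi : ℝ)
    (hkas1 : ∑ i, p i = 1) (hkas2 : (∑ i, p i ^ 2) + 2 * pphi ^ 2 = 1)
    (hp : ∀ i, p i < 1)
    (δ : ℝ) (hδ : 0 < δ)
    (hsub : ∀ i j k : Fin D, j ≠ k → δ ≤ 1 + p i - p j - p k) :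
    (∃ C : ℝ, 0 < C ∧
      ∀ (lam : Fin D → ℤ), lam ≠ 0 →
      ∀ tstar : ℝ, 0 < tstar → tstar ≤ 1 → tau p lam tstar = 1 →
      ∀ (η κ : ℝ → Fin D → Fin D → ℝ) (φ ψ ν : ℝ → ℝ),
        IsCMCTCSolution p pphi lam η κ φ ψ ν (Set.Ioc 0 tstar) →
      ∀ t ∈ Set.Ioc (0:ℝ) tstar,
        ∃ E' : ℝ, HasDerivAt (ElowSys p tstar η κ φ ψ) E' t ∧
          |t * E'| ≤ C * (t / tstar) ^ δ * ElowSys p tstar η κ φ ψ t) ∧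
    (∃ Clow : ℝ, 0 < Clow ∧
      ∀ (lam : Fin D → ℤ), lam ≠ 0 →
      ∀ tstar : ℝ, 0 < tstar → tstar ≤ 1 → tau p lam tstar = 1 →
      ∀ (η κ : ℝ → Fin D → Fin D → ℝ) (φ ψ ν : ℝ → ℝ),
        IsCMCTCSolution p pphi lam η κ φ ψ ν (Set.Ioc 0 tstar) →
      ∀ t ∈ Set.Ioc (0:ℝ) tstar,
        Clow⁻¹ * ElowSys p tstar η κ φ ψ t ≤ ElowSys p tstar η κ φ ψ tstar ∧
        ElowSys p tstar η κ φ ψ tstar ≤ Clow * ElowSys p tstar η κ φ ψ t) :=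
  einstein_low_freq_energy_estimate_general D hD p pphi δ hδ hsub
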